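/- arXiv:1410.7934 — 3 statements merged into one kernel-verified Lean document; each statement's English description precedes it below -/
import Mathlib

section
/- Let α > 1 and let f belong to the Müntz class M_α. Then for all x > 0 the summation formula Σ_{n=1}^∞ f(n² x) = Σ_{n=1}^∞ (Λf)(nx) holds, where (Λf)(x) = Σ_{n=1}^∞ λ(n) f(nx) is the operator with the Liouville function λ. -/
open MeasureTheory Filter Asymptotics Set Complex

noncomputable section

/-- The Mellin transform of `f`. -/
def mellinT (f : ℝ → ℂ) (s : ℂ) : ℂ := ∫ x in Ioi (0:ℝ), (x : ℂ) ^ (s - 1) * f x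

/-- The Müntz class `M_α`. -/
def MuntzClass (α : ℝ) (f : ℝ → ℂ) : Prop :=
  ContDiffOn ℝ 2 f (Ici 0) ∧
  ∀ j : ℕ, j ≤ 2 →
    (iteratedDerivWithin j f (Ici 0)) =O[atTop] fun x : ℝ => x ^ (-(α + (j : ℝ)))

/-- The Möbius transformation `(Θf)(x) = ∑ f(nx)`. -/
def thetaOp (f : ℝ → ℂ) (x : ℝ) : ℂ := ∑' n : ℕ, f ((n + 1 : ℝ) * x)

/-- The Müntz operator. -/
def muntzOp (f : ℝ → ℂ) (x : ℝ) : ℂ :=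
  thetaOp f x - (x : ℂ)⁻¹ * ∫ y in Ioi (0:ℝ), f y

/-- `(1/(2πi)) ∫_{σ-i∞}^{σ+i∞} g(s) ds`. -/
def lineIntegral (g : ℂ → ℂ) (σ : ℝ) : ℂ :=
  (2 * Real.pi)⁻¹ • ∫ t : ℝ, g (σ + t * Complex.I)

/-- The Fourier cosine transform. -/
def fourierCos (f : ℝ → ℂ) (x : ℝ) : ℂ :=
  (Real.sqrt (2 / Real.pi) : ℂ) * ∫ t in Ioi (0:ℝ), f t * (Real.cos (x * t) : ℂ)

/-- The reduced Möbius operator. -/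
def thetaHat (f : ℝ → ℂ) (x : ℝ) : ℂ :=
  ∑' n : ℕ, ((|ArithmeticFunction.moebius (n + 1)| : ℤ) : ℂ) * f ((n + 1 : ℝ) * x)

/-- The Voronoi operator. -/
def voronoiOp (f : ℝ → ℂ) (x : ℝ) : ℂ :=
  (∑' n : ℕ, ((n + 1 : ℕ).divisors.card : ℂ) * f ((n + 1 : ℝ) * x)) -
    ∫ y in Ioi (0:ℝ), f (x * y) *
      ((Real.log y + 2 * Real.eulerMascheroniConstant : ℝ) : ℂ)

/-- The operator with the Liouville function `λ(n) = (-1)^{Ω(n)}`: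
`(Λf)(x) = ∑ λ(n) f(nx)`. -/
def lambdaOp (f : ℝ → ℂ) (x : ℝ) : ℂ :=
  ∑' n : ℕ, (-1 : ℂ) ^ (ArithmeticFunction.cardFactors (n + 1)) * f ((n + 1 : ℝ) * x)

/-!
Expanding each `Λf` on the right, the right-hand side becomes the double series
`∑_{m,k ≥ 1} λ(k) f(mkx)`, which converges absolutely because `f(y) = O(y^{-α})` with
`α > 1`. Grouping its terms by `n = mk` gives `∑_n (∑_{d ∣ n} λ(d)) f(nx)`. The divisor sum
of `λ` is multiplicative and equals `1` at even prime powers and `0` at odd ones, so it is the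
indicator function of the squares, and only the terms `f(m²x)` survive.
-/

theorem Nat.isSquare_iff_forall_even_factorization {n : ℕ} :
    IsSquare n ↔ ∀ p, Even (n.factorization p) := by
  refine ⟨?_, fun h => ?_⟩
  · rintro ⟨m, rfl⟩ p
    simp [← sq, Nat.factorization_pow]
  rcases eq_or_ne n 0 with rfl | hn
  · exact ⟨0, rfl⟩
  refine ⟨n.factorization.prod fun p e => p ^ (e / 2), ?_⟩
  conv_lhs => rw [← Nat.prod_factorization_pow_eq_self hn]
  rw [← Finsupp.prod_mul]
  refine Finset.prod_congr rfl fun p _ => ?_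
  obtain ⟨c, hc⟩ := h p
  simp only [← pow_add, hc]
  congr 1
  omega

namespace ArithmeticFunction

theorem coe_zeta_mul_liouville_apply_prime_pow {p : ℕ} (hp : p.Prime) (k : ℕ) :
    (↑zeta * liouville) (p ^ k) = if Even k then 1 else 0 := by
  rw [coe_zeta_mul_apply, Nat.sum_divisors_prime_pow hp]
  simp only [liouville_apply (pow_ne_zero _ hp.ne_zero), cardFactors_apply_prime_pow hp,
    neg_one_geom_sum, Nat.even_add_one, ite_not]

theorem sum_divisors_liouville {n : ℕ} (hn : n ≠ 0) :
    ∑ d ∈ n.divisors, liouville d = if IsSquare n then 1 else 0 := by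
  have h_even : (∀ p ∈ n.primeFactors, Even (n.factorization p)) ↔ IsSquare n := by
    refine ⟨fun h => Nat.isSquare_iff_forall_even_factorization.2 fun p => ?_,
      fun h p _ => Nat.isSquare_iff_forall_even_factorization.1 h p⟩
    by_cases hp : p ∈ n.primeFactors
    · exact h p hp
    · rw [← Nat.support_factorization, Finsupp.notMem_support_iff] at hp
      simp [hp]
  have h_mult : (↑zeta * liouville).IsMultiplicative :=
    isMultiplicative_zeta.natCast.mul isMultiplicative_liouville
  rw [← coe_zeta_mul_apply, h_mult.multiplicative_factorization _ hn,
    Finsupp.prod, Nat.support_factorization,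
    Finset.prod_congr rfl fun p hp =>
      coe_zeta_mul_liouville_apply_prime_pow (Nat.prime_of_mem_primeFactors hp) _,
    Finset.prod_boole, if_congr h_even rfl rfl]

end ArithmeticFunction

theorem tendsto_succ_mul_succ_cofinite_atTop :
    Tendsto (fun p : ℕ × ℕ => (p.1 + 1) * (p.2 + 1)) cofinite atTop := by
  rw [← Nat.cofinite_eq_atTop]
  refine Tendsto.cofinite_of_finite_preimage_singleton fun n => ?_
  refine ((finite_Iic n).prod (finite_Iic n)).subset fun p hp => ?_
  simp only [mem_preimage, mem_singleton_iff] at hp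
  constructor <;> simp only [mem_Iic] <;> nlinarith

theorem summable_norm_comp_succ_mul_succ_of_isBigO_rpow {E : Type*} [SeminormedAddCommGroup E]
    {g : ℕ → E} {α : ℝ} (hα : 1 < α) (hg : g =O[atTop] fun n => (n : ℝ) ^ (-α)) :
    Summable fun p : ℕ × ℕ => ‖g ((p.1 + 1) * (p.2 + 1))‖ := by
  have h_rpow : Summable fun n : ℕ => ((n + 1 : ℕ) : ℝ) ^ (-α) :=
    (summable_nat_add_iff 1).2 (Real.summable_nat_rpow.2 (by linarith))
  have h_nonneg : 0 ≤ fun n : ℕ => ((n + 1 : ℕ) : ℝ) ^ (-α) := fun n => by positivity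
  refine summable_of_isBigO (h_rpow.mul_of_nonneg h_rpow h_nonneg h_nonneg) ?_
  refine (hg.comp_tendsto tendsto_succ_mul_succ_cofinite_atTop).norm_left.congr_right fun p => ?_
  simp only [Function.comp_apply, Nat.cast_mul]
  exact Real.mul_rpow (by positivity) (by positivity)

theorem isBigO_rpow_comp_natCast_mul {E : Type*} [Norm E] {f : ℝ → E} {α x : ℝ} (hx : 0 < x)
    (hf : f =O[atTop] fun y => y ^ (-α)) :
    (fun n : ℕ => f (n * x)) =O[atTop] fun n : ℕ => (n : ℝ) ^ (-α) := by
  refine (hf.comp_tendsto (tendsto_natCast_atTop_atTop.atTop_mul_const hx)).trans ?_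
  have h_eq :
      (fun n : ℕ => ((n : ℝ) * x) ^ (-α)) = fun n : ℕ => x ^ (-α) * (n : ℝ) ^ (-α) := by
    ext n
    rw [Real.mul_rpow (by positivity) hx.le, mul_comm]
  change (fun n : ℕ => ((n : ℝ) * x) ^ (-α)) =O[atTop] _
  rw [h_eq]
  exact isBigO_const_mul_self _ _ _

theorem tsum_ite_isSquare_succ {M : Type*} [AddCommMonoid M] [TopologicalSpace M] (g : ℕ → M) :
    ∑' n, (if IsSquare (n + 1) then g (n + 1) else 0) = ∑' m, g ((m + 1) ^ 2) := by
  have h_inj : Function.Injective fun m : ℕ => (m + 1) ^ 2 - 1 := by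
    intro a b h
    have ha : 0 < (a + 1) ^ 2 := by positivity
    have hb : 0 < (b + 1) ^ 2 := by positivity
    have := Nat.pow_left_injective two_ne_zero
      (show (a + 1) ^ 2 = (b + 1) ^ 2 by simp only at h; omega)
    omega
  rw [← h_inj.tsum_eq]
  · refine tsum_congr fun m => ?_
    rw [Nat.sub_add_cancel (by positivity : 0 < (m + 1) ^ 2), if_pos ⟨m + 1, sq _⟩]
  · rintro n hn
    obtain ⟨r, hr⟩ : IsSquare (n + 1) := by by_contra h; exact hn (if_neg h)
    have hr0 : r ≠ 0 := by rintro rfl; simp at hr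
    refine ⟨r - 1, ?_⟩
    change (r - 1 + 1) ^ 2 - 1 = n
    rw [Nat.sub_add_cancel (Nat.one_le_iff_ne_zero.2 hr0), sq, ← hr, Nat.add_sub_cancel]

theorem preimage_succ_mul_succ_sub_one_eq_image_divisorsAntidiagonal (n : ℕ) :
    (fun p : ℕ × ℕ => (p.1 + 1) * (p.2 + 1) - 1) ⁻¹' {n} =
      ((n + 1).divisorsAntidiagonal.image fun q => (q.1 - 1, q.2 - 1) : Set (ℕ × ℕ)) := by
  ext ⟨k, l⟩
  simp only [mem_preimage, mem_singleton_iff, Finset.coe_image, mem_image, Finset.mem_coe,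
    Nat.mem_divisorsAntidiagonal, Prod.exists, Prod.mk.injEq]
  constructor
  · intro h
    have : 1 ≤ (k + 1) * (l + 1) := Nat.one_le_iff_ne_zero.2 (by positivity)
    exact ⟨k + 1, l + 1, ⟨by omega, n.succ_ne_zero⟩, rfl, rfl⟩
  · rintro ⟨d, e, ⟨hde, -⟩, rfl, rfl⟩
    have hd : d ≠ 0 := by rintro rfl; simp at hde
    have he : e ≠ 0 := by rintro rfl; simp at hde
    rw [Nat.sub_add_cancel (Nat.one_le_iff_ne_zero.2 hd),
      Nat.sub_add_cancel (Nat.one_le_iff_ne_zero.2 he), hde, Nat.add_sub_cancel]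

theorem tsum_tsum_smul_comp_mul_eq_tsum_sum_divisors_smul {E : Type*} [AddCommGroup E]
    [UniformSpace E] [IsUniformAddGroup E] [CompleteSpace E] [T2Space E]
    (a : ℕ → ℤ) (g : ℕ → E)
    (h : Summable fun p : ℕ × ℕ => a (p.2 + 1) • g ((p.1 + 1) * (p.2 + 1))) :
    ∑' m, ∑' k, a (k + 1) • g ((m + 1) * (k + 1)) =
      ∑' n, (∑ d ∈ (n + 1).divisors, a d) • g (n + 1) := by
  have h_sum_fiber (n : ℕ) :
      ∑' p : (fun p : ℕ × ℕ => (p.1 + 1) * (p.2 + 1) - 1) ⁻¹' {n},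
        a (p.1.2 + 1) • g ((p.1.1 + 1) * (p.1.2 + 1)) =
      (∑ d ∈ (n + 1).divisors, a d) • g (n + 1) := by
    have h_pos {q : ℕ × ℕ} (hq : q ∈ (n + 1).divisorsAntidiagonal) :
        1 ≤ q.1 ∧ 1 ≤ q.2 := by
      obtain ⟨h1, h2⟩ := Nat.ne_zero_of_mem_divisorsAntidiagonal hq
      omega
    rw [preimage_succ_mul_succ_sub_one_eq_image_divisorsAntidiagonal,
      Finset.tsum_subtype' _ fun p : ℕ × ℕ => a (p.2 + 1) • g ((p.1 + 1) * (p.2 + 1)),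
      Finset.sum_image, Finset.sum_smul,
      ← Nat.sum_divisorsAntidiagonal' fun _ e => a e • g (n + 1)]
    · refine Finset.sum_congr rfl fun q hq => ?_
      obtain ⟨h1, h2⟩ := h_pos hq
      rw [Nat.sub_add_cancel h1, Nat.sub_add_cancel h2, (Nat.mem_divisorsAntidiagonal.1 hq).1]
    · intro q hq q' hq' h
      obtain ⟨h1, h2⟩ := h_pos hq
      obtain ⟨h1', h2'⟩ := h_pos hq'
      simp only [Prod.mk.injEq] at h
      exact Prod.ext (by omega) (by omega)
  rw [← h.tsum_prod, ← (h.hasSum.tsum_fiberwise _).tsum_eq]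
  exact tsum_congr h_sum_fiber

theorem MuntzClass.isBigO_rpow {α : ℝ} {f : ℝ → ℂ} (hf : MuntzClass α f) :
    f =O[atTop] fun x : ℝ => x ^ (-α) := by
  simpa only [iteratedDerivWithin_zero, CharP.cast_eq_zero, add_zero] using hf.2 0 (by norm_num)

/-- summation formula for the operator with the Liouville function. -/
theorem liouville_summation (α : ℝ) (hα : 1 < α) (f : ℝ → ℂ) (hf : MuntzClass α f) :
    ∀ x : ℝ, 0 < x →
      (∑' n : ℕ, f ((n + 1 : ℝ) ^ 2 * x)) = ∑' n : ℕ, lambdaOp f ((n + 1 : ℝ) * x) := by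
  intro x hx
  set g : ℕ → ℂ := fun n => f (n * x)
  have h_liouville_smul (k n : ℕ) :
      ArithmeticFunction.liouville (k + 1) • g n =
        (-1 : ℂ) ^ ArithmeticFunction.cardFactors (k + 1) * g n := by
    rw [ArithmeticFunction.liouville_apply k.succ_ne_zero, zsmul_eq_mul]
    push_cast
    rfl
  have h_summable : Summable fun p : ℕ × ℕ =>
      ArithmeticFunction.liouville (p.2 + 1) • g ((p.1 + 1) * (p.2 + 1)) :=
    .of_norm_bounded (summable_norm_comp_succ_mul_succ_of_isBigO_rpow hα
      (isBigO_rpow_comp_natCast_mul hx hf.isBigO_rpow)) fun p => by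
      rw [h_liouville_smul, norm_mul, norm_pow, norm_neg, norm_one, one_pow, one_mul]
  calc ∑' n : ℕ, f ((n + 1 : ℝ) ^ 2 * x)
      = ∑' n, if IsSquare (n + 1) then g (n + 1) else 0 := by
        rw [tsum_ite_isSquare_succ]
        push_cast [g]
        rfl
    _ = ∑' n, (∑ d ∈ (n + 1).divisors, ArithmeticFunction.liouville d) • g (n + 1) := by
        simp only [ArithmeticFunction.sum_divisors_liouville (Nat.succ_ne_zero _), ite_smul,
          one_smul, zero_smul]
    _ = ∑' m, ∑' k, ArithmeticFunction.liouville (k + 1) • g ((m + 1) * (k + 1)) :=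
        (tsum_tsum_smul_comp_mul_eq_tsum_sum_divisors_smul _ _ h_summable).symm
    _ = ∑' n : ℕ, lambdaOp f ((n + 1 : ℝ) * x) := by
        refine tsum_congr fun m => tsum_congr fun k => ?_
        rw [h_liouville_smul]
        push_cast [g]
        ring_nf
end
end

section
/- Let α > 1 and let f belong to the Müntz class M_α. Then for all x > 0 the Poisson type summation formula holds: Σ_{n : μ(n) ≠ 0} f(nx) = Σ_{n=1}^∞ Σ_{m=1}^∞ μ(n) f(n² m x) = Σ_{n=1}^∞ μ(n) (Θf)(n² x). -/
open MeasureTheory Filter Asymptotics Set Complex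

noncomputable section

/-! Writing `k = b² a` with `a` squarefree, the `d` with `d² ∣ k` are exactly the divisors of
`b`, so `∑_{d² ∣ k} μ(d) = ∑_{d ∣ b} μ(d) = [b = 1] = [k squarefree]`. Weighting `f(kx)` by this
identity and regrouping the terms by the pairs `(d, m)` with `k = d² m` gives the first formula;
the regrouping is legitimate because `|f(y)| ≪ y^{-α}` with `α > 1` makes the double series
absolutely convergent. The second formula is `∑_m f(d² m x) = (Θf)(d² x)`. -/

theorem Nat.dvd_of_sq_dvd_sq_mul {a b d : ℕ} (ha : Squarefree a) (h : d ^ 2 ∣ b ^ 2 * a) :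
    d ∣ b := by
  rcases eq_or_ne b 0 with rfl | hb
  · exact dvd_zero d
  have hd : d ≠ 0 := by rintro rfl; simp [hb, ha.ne_zero] at h
  rw [← Nat.factorization_le_iff_dvd hd hb]
  have hle := (Nat.factorization_le_iff_dvd (by positivity) (by simp [hb, ha.ne_zero])).2 h
  intro p
  have hp := hle p
  simp only [Nat.factorization_mul (pow_ne_zero 2 hb) ha.ne_zero, Nat.factorization_pow,
    Finsupp.add_apply, Finsupp.smul_apply, smul_eq_mul] at hp
  have := ha.natFactorization_le_one p
  omega

theorem summable_rpow_sq_mul {α : ℝ} (hα : 1 < α) :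
    Summable fun p : ℕ × ℕ => (((p.1 + 1) ^ 2 * (p.2 + 1) : ℕ) : ℝ) ^ (-α) := by
  have hshift {s : ℝ} (hs : 1 < s) : Summable fun n : ℕ => ((n + 1 : ℕ) : ℝ) ^ (-s) :=
    (summable_nat_add_iff 1).2 (Real.summable_nat_rpow.2 (by linarith))
  refine ((hshift (s := 2 * α) (by linarith)).mul_of_nonneg (hshift hα) (fun _ => by positivity)
    fun _ => by positivity).congr fun p => ?_
  rw [Nat.cast_mul, Real.mul_rpow (by positivity) (by positivity), Nat.cast_pow,
    ← Real.rpow_natCast, ← Real.rpow_mul (by positivity), mul_neg, Nat.cast_ofNat]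

namespace ArithmeticFunction

open scoped ArithmeticFunction.Moebius

theorem sum_moebius_of_sq_dvd (k : ℕ) :
    ∑ d ∈ k.divisors with d ^ 2 ∣ k, μ d = if Squarefree k then 1 else 0 := by
  rcases eq_or_ne k 0 with rfl | hk
  · simp
  obtain ⟨a, b, rfl, ha⟩ := Nat.sq_mul_squarefree k
  have hb : b ≠ 0 := by rintro rfl; simp at hk
  have hfilter : {d ∈ (b ^ 2 * a).divisors | d ^ 2 ∣ b ^ 2 * a} = b.divisors := by
    ext d
    simp only [Finset.mem_filter, Nat.mem_divisors]
    refine ⟨fun h => ⟨Nat.dvd_of_sq_dvd_sq_mul ha h.2, hb⟩, fun h => ?_⟩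
    have hsq : d ^ 2 ∣ b ^ 2 * a := (pow_dvd_pow_of_dvd h.1 2).mul_right a
    exact ⟨⟨(dvd_pow_self d two_ne_zero).trans hsq, hk⟩, hsq⟩
  have hsqf : Squarefree (b ^ 2 * a) ↔ b = 1 := by
    refine ⟨fun h => Nat.isUnit_iff.1 (h b ⟨a, by ring⟩), ?_⟩
    rintro rfl
    simpa using ha
  rw [hfilter, ← coe_mul_zeta_apply, moebius_mul_coe_zeta, one_apply]
  exact if_congr hsqf.symm rfl rfl

theorem hasSum_squarefree_of_hasSum_moebius_smul {E : Type*} [AddCommGroup E]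
    [TopologicalSpace E] [IsTopologicalAddGroup E] [T3Space E] {h : ℕ → E} {a : E}
    (ha : HasSum (fun p : ℕ × ℕ => μ (p.1 + 1) • h ((p.1 + 1) ^ 2 * (p.2 + 1))) a) :
    HasSum (fun k => if Squarefree k then h k else 0) a := by
  classical
  -- `ι` reindexes the given family as `G`; summing `G` over `d` first yields
  -- `(∑_{d² ∣ k} μ d) • h k`, which `sum_moebius_of_sq_dvd` evaluates.
  set ι : ℕ × ℕ → ℕ × ℕ := fun p => ((p.1 + 1) ^ 2 * (p.2 + 1), p.1 + 1)
  set G : ℕ × ℕ → E := fun q => if q.2 ∈ q.1.divisors ∧ q.2 ^ 2 ∣ q.1 then μ q.2 • h q.1 else 0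
  have hι : Function.Injective ι := by
    rintro ⟨n, m⟩ ⟨n', m'⟩ hnm
    obtain ⟨hk, hn⟩ := Prod.mk.inj hnm
    obtain rfl : n = n' := by simpa using hn
    simpa using hk
  have hG_supp : ∀ q ∉ Set.range ι, G q = 0 := by
    rintro ⟨k, d⟩ hq
    refine if_neg ?_
    rintro ⟨hd, m, hm⟩
    have hd1 : d - 1 + 1 = d := Nat.succ_pred_eq_of_ne_zero (by rintro rfl; simp_all)
    have hm1 : m - 1 + 1 = m := Nat.succ_pred_eq_of_ne_zero (by rintro rfl; simp_all)
    exact hq ⟨(d - 1, m - 1), by simp only [ι, hd1, hm1, ← hm]⟩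
  have hG : HasSum G a := by
    refine (hι.hasSum_iff hG_supp).1 (ha.congr_fun fun p => if_pos ?_)
    exact ⟨Nat.mem_divisors.2 ⟨⟨(p.1 + 1) * (p.2 + 1), by ring⟩, by positivity⟩, ⟨p.2 + 1, rfl⟩⟩
  refine hG.prod_fiberwise fun k => ?_
  have hfib := hasSum_sum_of_ne_finset_zero (L := SummationFilter.unconditional ℕ)
    (s := {d ∈ k.divisors | d ^ 2 ∣ k}) (f := fun d => G (k, d))
    fun d hd => if_neg (by simpa using hd)
  simp only [G] at hfib
  rwa [Finset.sum_congr rfl fun d hd => if_pos (Finset.mem_filter.1 hd), ← Finset.sum_smul,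
    sum_moebius_of_sq_dvd, ite_smul, one_smul, zero_smul] at hfib

theorem tsum_squarefree_eq_tsum_tsum_moebius_smul {E : Type*} [AddCommGroup E]
    [UniformSpace E] [IsUniformAddGroup E] [CompleteSpace E] [T0Space E] {h : ℕ → E}
    (hs : Summable fun p : ℕ × ℕ => μ (p.1 + 1) • h ((p.1 + 1) ^ 2 * (p.2 + 1))) :
    ∑' n, (if Squarefree (n + 1) then h (n + 1) else 0) =
      ∑' n, ∑' m, μ (n + 1) • h ((n + 1) ^ 2 * (m + 1)) := by
  have hsum := (hasSum_nat_add_iff' 1).2 (hasSum_squarefree_of_hasSum_moebius_smul hs.hasSum)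
  rw [Finset.sum_range_one, if_neg not_squarefree_zero, sub_zero] at hsum
  rw [hsum.tsum_eq, hs.tsum_prod]

theorem summable_moebius_smul_sq_mul {E : Type*} [NormedAddCommGroup E] [CompleteSpace E]
    {h : ℕ → E} {α C : ℝ} (hα : 1 < α) (hh : ∀ k ≠ 0, ‖h k‖ ≤ C * (k : ℝ) ^ (-α)) :
    Summable fun p : ℕ × ℕ => μ (p.1 + 1) • h ((p.1 + 1) ^ 2 * (p.2 + 1)) := by
  refine ((summable_rpow_sq_mul hα).mul_left C).of_norm_bounded fun p => ?_
  calc ‖μ (p.1 + 1) • h ((p.1 + 1) ^ 2 * (p.2 + 1))‖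
      ≤ ‖μ (p.1 + 1)‖ * ‖h ((p.1 + 1) ^ 2 * (p.2 + 1))‖ := norm_zsmul_le _ _
    _ ≤ 1 * ‖h ((p.1 + 1) ^ 2 * (p.2 + 1))‖ := by
      gcongr
      rw [Int.norm_eq_abs]
      exact_mod_cast abs_moebius_le_one
    _ ≤ C * (((p.1 + 1) ^ 2 * (p.2 + 1) : ℕ) : ℝ) ^ (-α) := by
      rw [one_mul]
      exact hh _ (by positivity)

end ArithmeticFunction

theorem Asymptotics.IsBigO.principal_Ici_of_continuousOn {E F : Type*} [NormedAddCommGroup E]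
    [NormedAddCommGroup F] {f : ℝ → E} {g : ℝ → F} {c : ℝ} (hfg : f =O[atTop] g)
    (hf : ContinuousOn f (Ici c)) (hg : ContinuousOn g (Ici c)) (hg0 : ∀ x ∈ Ici c, g x ≠ 0) :
    f =O[𝓟 (Ici c)] g := by
  obtain ⟨C, -, R, -, hR⟩ := hfg.exists_mem_basis atTop_basis
  have hIcc : f =O[𝓟 (Icc c R)] g :=
    ((hf.mono Icc_subset_Ici_self).isBigO_principal isCompact_Icc (c := (1 : ℝ)) (by simp)).trans
      ((hg.mono Icc_subset_Ici_self).isBigO_rev_principal isCompact_Icc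
        (fun x hx => hg0 x hx.1) (1 : ℝ))
  have hIci : f =O[𝓟 (Ici R)] g := isBigO_principal.2 ⟨C, hR⟩
  exact (hIcc.sup hIci).mono (sup_principal ▸ principal_mono.2 Ici_subset_Icc_union_Ici)

theorem MuntzClass.isBigO_Ici {α : ℝ} {f : ℝ → ℂ} (hf : MuntzClass α f) {c : ℝ} (hc : 0 < c) :
    f =O[𝓟 (Ici c)] fun x => x ^ (-α) := by
  have hO := hf.2 0 zero_le_two
  simp only [iteratedDerivWithin_zero, CharP.cast_eq_zero, add_zero] at hO
  refine hO.principal_Ici_of_continuousOn (hf.1.continuousOn.mono (Ici_subset_Ici.2 hc.le))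
    ?_ fun x hx => (Real.rpow_pos_of_pos (hc.trans_le hx) _).ne'
  exact continuousOn_id.rpow_const fun x hx => Or.inl (hc.trans_le hx).ne'

/-- Poisson type summation formulas for the reduced Möbius operator; the left-hand
sum runs over the squarefree integers, i.e. those `n` with `μ(n) ≠ 0`. -/
theorem poisson_type_squarefree (α : ℝ) (hα : 1 < α) (f : ℝ → ℂ) (hf : MuntzClass α f) :
    ∀ x : ℝ, 0 < x →
      (∑' n : ℕ, if ArithmeticFunction.moebius (n + 1) ≠ 0 then f ((n + 1 : ℝ) * x) else 0) =
        (∑' n : ℕ, ∑' m : ℕ, (ArithmeticFunction.moebius (n + 1) : ℂ) *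
          f ((n + 1 : ℝ) ^ 2 * (m + 1 : ℝ) * x)) ∧
      (∑' n : ℕ, ∑' m : ℕ, (ArithmeticFunction.moebius (n + 1) : ℂ) *
          f ((n + 1 : ℝ) ^ 2 * (m + 1 : ℝ) * x)) =
        ∑' n : ℕ, (ArithmeticFunction.moebius (n + 1) : ℂ) * thetaOp f ((n + 1 : ℝ) ^ 2 * x) := by
  intro x hx
  obtain ⟨C, hC⟩ := isBigO_principal.1 (hf.isBigO_Ici hx)
  set h : ℕ → ℂ := fun k => f (k * x)
  have hbound : ∀ k ≠ 0, ‖h k‖ ≤ C * x ^ (-α) * (k : ℝ) ^ (-α) := fun k hk => by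
    have hk1 : (1 : ℝ) ≤ k := by exact_mod_cast Nat.one_le_iff_ne_zero.2 hk
    calc ‖h k‖ ≤ C * ‖(k * x) ^ (-α)‖ := hC _ (le_mul_of_one_le_left hx.le hk1)
      _ = C * x ^ (-α) * (k : ℝ) ^ (-α) := by
        rw [Real.norm_of_nonneg (by positivity), Real.mul_rpow (by positivity) hx.le]
        ring
  have hs := ArithmeticFunction.summable_moebius_smul_sq_mul hα hbound
  refine ⟨?_, tsum_congr fun n => ?_⟩
  · simpa only [h, ← ArithmeticFunction.moebius_ne_zero_iff_squarefree, zsmul_eq_mul, Nat.cast_mul,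
      Nat.cast_pow, Nat.cast_add, Nat.cast_one] using
      ArithmeticFunction.tsum_squarefree_eq_tsum_tsum_moebius_smul hs
  · rw [thetaOp, ← tsum_mul_left]
    exact tsum_congr fun m => by ring_nf
end
end

section
/- Let α > 2 and let f belong to the Müntz class M_α. Then for all x > 0 the summation formula Σ_{n=1}^∞ n f(nx) = Σ_{n=1}^∞ (Φf)(nx) holds, where (Φf)(x) = Σ_{n=1}^∞ φ(n) f(nx). -/
set_option maxHeartbeats 1000000


open MeasureTheory Filter Asymptotics Set Complex

noncomputable section

/-- The operator with Euler's totient function: `(Φf)(x) = ∑ φ(n) f(nx)`. -/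
def phiOp (f : ℝ → ℂ) (x : ℝ) : ℂ :=
  ∑' n : ℕ, (Nat.totient (n + 1) : ℂ) * f ((n + 1 : ℝ) * x)

private lemma bound_aux (α : ℝ) (f : ℝ → ℂ)
    (hO : f =O[atTop] fun y : ℝ => y ^ (-α)) (x : ℝ) (hx : 0 < x) :
    ∃ C : ℝ, 0 ≤ C ∧ ∀ k : ℕ, k ≠ 0 → ‖f (k * x)‖ ≤ C * (k : ℝ) ^ (-α) := by
  obtain ⟨c, hc, hbig⟩ := hO.exists_pos
  rw [Asymptotics.isBigOWith_iff, eventually_atTop] at hbig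
  obtain ⟨R, hR⟩ := hbig
  set N : ℕ := ⌈R / x⌉₊ with hN
  obtain ⟨M, hM⟩ := ((Finset.range (N + 1)).image
    (fun k : ℕ => ‖f (k * x)‖ * (k : ℝ) ^ α)).exists_le
  refine ⟨max (c * x ^ (-α)) (max M 0), le_max_of_le_right (le_max_right _ _), ?_⟩
  intro k hk
  have hk0 : (0 : ℝ) < k := by exact_mod_cast Nat.pos_of_ne_zero hk
  by_cases hkN : N < k
  · have hkx : R ≤ (k : ℝ) * x := by
      have h1 : R / x ≤ (N : ℝ) := Nat.le_ceil _
      have h2 : (N : ℝ) ≤ (k : ℝ) := by exact_mod_cast hkN.le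
      calc R = (R / x) * x := by field_simp
        _ ≤ (k : ℝ) * x := by
          apply mul_le_mul_of_nonneg_right (h1.trans h2) hx.le
    have h := hR ((k : ℝ) * x) hkx
    have hnorm : ‖((k : ℝ) * x) ^ (-α)‖ = ((k : ℝ) * x) ^ (-α) := by
      rw [Real.norm_eq_abs, _root_.abs_of_nonneg (Real.rpow_nonneg (by positivity) _)]
    rw [hnorm, Real.mul_rpow hk0.le hx.le] at h
    refine h.trans ?_
    have : c * ((k : ℝ) ^ (-α) * x ^ (-α)) = (c * x ^ (-α)) * (k : ℝ) ^ (-α) := by ring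
    rw [this]
    exact mul_le_mul_of_nonneg_right (le_max_left _ _) (Real.rpow_nonneg hk0.le _)
  · have hmem : ‖f ((k : ℝ) * x)‖ * (k : ℝ) ^ α ∈
        (Finset.range (N + 1)).image (fun k : ℕ => ‖f (k * x)‖ * (k : ℝ) ^ α) :=
      Finset.mem_image_of_mem _ (Finset.mem_range.mpr (by omega))
    have h1 : ‖f ((k : ℝ) * x)‖ * (k : ℝ) ^ α ≤ max (c * x ^ (-α)) (max M 0) := (hM _ hmem).trans (le_max_of_le_right (le_max_left M 0))
    have h2 : ‖f ((k : ℝ) * x)‖ = (‖f ((k : ℝ) * x)‖ * (k : ℝ) ^ α) * (k : ℝ) ^ (-α) := by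
      rw [mul_assoc, ← Real.rpow_add hk0]
      simp
    rw [h2]
    exact mul_le_mul_of_nonneg_right h1 (Real.rpow_nonneg hk0.le _)

/-- summation formula `∑ n f(nx) = ∑ (Φf)(nx)`. -/
theorem totient_summation (α : ℝ) (hα : 2 < α) (f : ℝ → ℂ) (hf : MuntzClass α f) :
    ∀ x : ℝ, 0 < x →
      (∑' n : ℕ, ((n + 1 : ℝ) : ℂ) * f ((n + 1 : ℝ) * x)) =
        ∑' n : ℕ, phiOp f ((n + 1 : ℝ) * x) := by
  intro x hx
  have hO : f =O[atTop] fun y : ℝ => y ^ (-α) := by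
    have h := hf.2 0 (by norm_num)
    simpa using h
  obtain ⟨C, hC0, hC⟩ := bound_aux α f hO x hx
  set A : ℕ → ℂ := fun k => if k = 0 then 0 else f ((k : ℝ) * x) with hA
  set g : ℕ × ℕ → ℂ := fun p => (Nat.totient p.2 : ℂ) * A (p.1 * p.2) with hgdef
  -- summability
  have hU : Summable (fun n : ℕ => (n : ℝ) ^ (-α)) :=
    Real.summable_nat_rpow.mpr (by linarith)
  have hV : Summable (fun m : ℕ => C * (m : ℝ) ^ (1 - α)) :=
    (Real.summable_nat_rpow.mpr (by linarith)).mul_left C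
  have hUV : Summable (fun p : ℕ × ℕ => ((p.1 : ℝ) ^ (-α)) * (C * (p.2 : ℝ) ^ (1 - α))) :=
    hU.mul_of_nonneg hV (fun n => Real.rpow_nonneg (Nat.cast_nonneg n) _)
      (fun m => mul_nonneg hC0 (Real.rpow_nonneg (Nat.cast_nonneg m) _))
  have hbound : ∀ p : ℕ × ℕ, ‖g p‖ ≤ ((p.1 : ℝ) ^ (-α)) * (C * (p.2 : ℝ) ^ (1 - α)) := by
    rintro ⟨n, m⟩
    have hRnn : 0 ≤ ((n : ℝ) ^ (-α)) * (C * (m : ℝ) ^ (1 - α)) :=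
      mul_nonneg (Real.rpow_nonneg (Nat.cast_nonneg _) _)
        (mul_nonneg hC0 (Real.rpow_nonneg (Nat.cast_nonneg _) _))
    rcases eq_or_ne n 0 with rfl | hn
    · have hz : g (0, m) = 0 := by simp [hgdef, hA]
      simpa [hz] using hRnn
    rcases eq_or_ne m 0 with rfl | hm
    · have hz : g (n, 0) = 0 := by simp [hgdef]
      simpa [hz] using hRnn
    have hn0 : (0 : ℝ) < n := by exact_mod_cast Nat.pos_of_ne_zero hn
    have hm0 : (0 : ℝ) < m := by exact_mod_cast Nat.pos_of_ne_zero hm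
    have hnm : n * m ≠ 0 := Nat.mul_ne_zero hn hm
    have hAle : ‖A (n * m)‖ ≤ C * ((n * m : ℕ) : ℝ) ^ (-α) := by
      simp only [hA, if_neg hnm]
      exact hC _ hnm
    have h1 : ‖g (n, m)‖ = (Nat.totient m : ℝ) * ‖A (n * m)‖ := by
      simp [hgdef, norm_mul]
    rw [h1]
    have h2 : (Nat.totient m : ℝ) * ‖A (n * m)‖ ≤ (m : ℝ) * (C * ((n * m : ℕ) : ℝ) ^ (-α)) := by
      apply mul_le_mul (by exact_mod_cast Nat.totient_le m) hAle (norm_nonneg _) hm0.le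
    refine h2.trans (le_of_eq ?_)
    have e1 : ((n * m : ℕ) : ℝ) ^ (-α) = (n : ℝ) ^ (-α) * (m : ℝ) ^ (-α) := by
      push_cast
      exact Real.mul_rpow hn0.le hm0.le
    have e2 : (m : ℝ) ^ (1 - α) = (m : ℝ) * (m : ℝ) ^ (-α) := by
      rw [show (1 - α) = 1 + (-α) by ring, Real.rpow_add hm0, Real.rpow_one]
    rw [e1, e2]; ring
  have hgnorm : Summable fun p : ℕ × ℕ => ‖g p‖ :=
    Summable.of_nonneg_of_le (fun p => norm_nonneg _) hbound hUV
  have hgsum : Summable g := hgnorm.of_norm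
  -- inner identity
  have hinner : ∀ n : ℕ, phiOp f ((n + 1 : ℝ) * x) = ∑' m, g (n + 1, m) := by
    intro n
    have h1 : ∀ m : ℕ, (Nat.totient (m + 1) : ℂ) * f ((m + 1 : ℝ) * ((n + 1 : ℝ) * x))
        = g (n + 1, m + 1) := by
      intro m
      simp only [hgdef, hA, if_neg (Nat.mul_ne_zero n.succ_ne_zero m.succ_ne_zero)]
      congr 2
      push_cast
      ring
    rw [phiOp, tsum_congr h1]
    refine Function.Injective.tsum_eq (g := fun m : ℕ => m + 1)
      (f := fun m : ℕ => g (n + 1, m)) (add_left_injective 1) ?_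
    intro m hm
    rcases m with _ | m
    · exfalso
      apply hm
      simp [hgdef]
    · exact ⟨m, rfl⟩
  rw [tsum_congr hinner]
  -- outer shift
  have houter : (∑' n : ℕ, ∑' m, g (n + 1, m)) = ∑' n : ℕ, ∑' m, g (n, m) := by
    refine Function.Injective.tsum_eq (g := fun n : ℕ => n + 1)
      (f := fun n : ℕ => ∑' m, g (n, m)) (add_left_injective 1) ?_
    intro n hn
    rcases n with _ | n
    · exfalso
      apply hn
      have : ∀ m : ℕ, g (0, m) = 0 := by
        intro m
        simp [hgdef, hA]
      simp [Function.mem_support, tsum_congr this, tsum_zero]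
    · exact ⟨n, rfl⟩
  rw [houter, ← Summable.tsum_prod' hgsum hgsum.prod_factor]
  -- fiberwise
  have hfib := hgsum.hasSum.tsum_fiberwise (fun p : ℕ × ℕ => p.1 * p.2)
  rw [← hfib.tsum_eq]
  have hfibval : ∀ k : ℕ,
      (∑' (p : (fun p : ℕ × ℕ => p.1 * p.2) ⁻¹' {k}), g p) = (k : ℂ) * A k := by
    intro k
    rcases eq_or_ne k 0 with rfl | hk
    · have hz : ∀ p : (fun p : ℕ × ℕ => p.1 * p.2) ⁻¹' {(0 : ℕ)}, g p = 0 := by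
        rintro ⟨⟨a, b⟩, hp⟩
        have hab : a * b = 0 := hp
        have hz : A (a * b) = 0 := by rw [hab]; simp [hA]
        simp [hgdef, hz]
      rw [tsum_congr hz, tsum_zero]
      simp
    · rw [show (fun p : ℕ × ℕ => p.1 * p.2) ⁻¹' {k} = ↑(Nat.divisorsAntidiagonal k) by
        ext p; simp [Nat.mem_divisorsAntidiagonal, hk],
        Finset.tsum_subtype' (Nat.divisorsAntidiagonal k) g]
      have hcg : ∀ p ∈ Nat.divisorsAntidiagonal k, g p = (Nat.totient p.2 : ℂ) * A k := by
        intro p hp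
        rw [hgdef]
        simp only
        rw [(Nat.mem_divisorsAntidiagonal.mp hp).1]
      rw [Finset.sum_congr rfl hcg, ← Finset.sum_mul]
      congr 1
      have h3 : ∑ p ∈ Nat.divisorsAntidiagonal k, (Nat.totient p.2 : ℂ)
          = ((∑ p ∈ Nat.divisorsAntidiagonal k, Nat.totient p.2 : ℕ) : ℂ) := by
        push_cast
        rfl
      rw [h3]
      have h4 := Nat.sum_divisorsAntidiagonal' (fun _ j => Nat.totient j) (n := k)
      rw [h4, Nat.sum_totient]
  rw [tsum_congr hfibval]
  -- final shift back
  have hfinal : (∑' n : ℕ, ((n + 1 : ℝ) : ℂ) * f ((n + 1 : ℝ) * x))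
      = ∑' n : ℕ, ((n + 1 : ℕ) : ℂ) * A (n + 1) := by
    apply tsum_congr
    intro n
    simp only [hA, if_neg n.succ_ne_zero]
    push_cast
    rfl
  rw [hfinal]
  refine Function.Injective.tsum_eq (g := fun n : ℕ => n + 1)
    (f := fun k : ℕ => (k : ℂ) * A k) (add_left_injective 1) ?_
  intro k hk
  rcases k with _ | k
  · exfalso
    apply hk
    simp
  · exact ⟨k, rfl⟩
end
end
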